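/- If N is a positive integer not divisible by 7 and not divisible by 9, then every integer n can be written as n ≡ u³ + v³ (mod N) for some integers u, v. -/

import Mathlib

/-!
If `p ≢ 1 (mod 3)`, cubing is a bijection of `𝔽ₚ`. If `p ≡ 1 (mod 3)`, take a cubic character `χ`
and suppose `n` is not a sum of two cubes, so that `ν = χ n` is a primitive cube root of unity.
Then `χ x χ (1 - x) ≠ ν` for every `x`, for otherwise one of `1 - x`, `x`, `x⁻¹`, `1` would be a
nonzero sum of two cubes in the same cubic class as `n`. Hence `χ x χ (1 - x)` is a root of
`t³ + ν t² + ν² t`, and summing over `x` gives `p - 2 + 2 Re (ν² J(χ, χ)) = 0`, incompatible with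
`|J(χ, χ)|² = p` once `p > 7`. For `p ≠ 3, 7`, a representation `n = u³ + v³` in `𝔽ₚ` with `u ≠ 0`
lifts to `ℤ_[p]` by Hensel's lemma and so descends to every `ℤ/pᵏ`; the hypotheses leave only the
modulus `3` among powers of `3` and `7`, and the Chinese remainder theorem combines prime powers.
-/

open Finset Polynomial

def IsSumOfTwoCubes {R : Type*} [Semiring R] (x : R) : Prop :=
  ∃ u v : R, u ^ 3 + v ^ 3 = x

namespace IsSumOfTwoCubes

variable {R S : Type*}

lemma map [Semiring R] [Semiring S] {F : Type*} [FunLike F R S] [RingHomClass F R S] (f : F)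
    {x : R} (hx : IsSumOfTwoCubes x) : IsSumOfTwoCubes (f x) := by
  obtain ⟨u, v, rfl⟩ := hx
  exact ⟨f u, f v, by simp only [map_add, map_pow]⟩

lemma prodMk [Semiring R] [Semiring S] {x : R} {y : S} (hx : IsSumOfTwoCubes x)
    (hy : IsSumOfTwoCubes y) : IsSumOfTwoCubes (x, y) := by
  obtain ⟨u, v, rfl⟩ := hx
  obtain ⟨u', v', rfl⟩ := hy
  exact ⟨(u, u'), (v, v'), rfl⟩

lemma mul_cube [CommSemiring R] {x : R} (hx : IsSumOfTwoCubes x) (c : R) :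
    IsSumOfTwoCubes (c ^ 3 * x) := by
  obtain ⟨u, v, rfl⟩ := hx
  exact ⟨c * u, c * v, by ring⟩

lemma one_sub_cube [CommRing R] (c : R) : IsSumOfTwoCubes (1 - c ^ 3) :=
  ⟨1, -c, by ring⟩

lemma exists_left_ne_zero [CommRing R] [Nontrivial R] {x : R} (hx : IsSumOfTwoCubes x) :
    ∃ u v : R, u ≠ 0 ∧ u ^ 3 + v ^ 3 = x := by
  obtain ⟨u, v, rfl⟩ := hx
  by_cases hu : u = 0
  · by_cases hv : v = 0
    · exact ⟨1, -1, one_ne_zero, by rw [hu, hv]; ring⟩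
    · exact ⟨v, u, hv, add_comm _ _⟩
  · exact ⟨u, v, hu, rfl⟩

end IsSumOfTwoCubes

lemma ZMod.isSumOfTwoCubes_mul {m n : ℕ} (hmn : m.Coprime n)
    (hm : ∀ x : ZMod m, IsSumOfTwoCubes x) (hn : ∀ x : ZMod n, IsSumOfTwoCubes x)
    (x : ZMod (m * n)) : IsSumOfTwoCubes x := by
  set e := ZMod.chineseRemainder hmn
  simpa using ((hm (e x).1).prodMk (hn (e x).2)).map e.symm

lemma sq_add_self_add_one_eq_zero {R : Type*} [CommRing R] [IsDomain R] {a : R} (h3 : a ^ 3 = 1)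
    (h1 : a ≠ 1) : a ^ 2 + a + 1 = 0 :=
  mul_left_cancel₀ (sub_ne_zero.mpr h1) (by linear_combination h3)

lemma inv_eq_sq_of_orderOf_eq_three {G : Type*} [Group G] {g : G} (h : orderOf g = 3) :
    g⁻¹ = g ^ 2 :=
  inv_eq_of_mul_eq_one_right <| by
    rw [← pow_succ', show 2 + 1 = orderOf g from h.symm, pow_orderOf_eq_one]

lemma pow_three_add_mul_sq_add_sq_mul_eq_zero {R : Type*} [CommRing R] [IsDomain R] {ν t : R}
    (hν : ν ^ 2 + ν + 1 = 0) (ht : t ^ 4 = t) (htν : t ≠ ν) :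
    t ^ 3 + ν * t ^ 2 + ν ^ 2 * t = 0 :=
  mul_left_cancel₀ (sub_ne_zero.mpr htν) (by linear_combination ht - t * (ν - 1) * hν)

lemma Complex.sub_two_sq_le_four_mul {a : ℂ} {q : ℝ} (hsum : a + star a = 2 - q)
    (hprod : a * star a = q) : (q - 2) ^ 2 ≤ 4 * q := by
  rw [Complex.star_def, Complex.add_conj] at hsum
  rw [Complex.star_def, Complex.mul_conj] at hprod
  have hre : 2 * a.re = 2 - q := by exact_mod_cast hsum
  have hnorm : Complex.normSq a = q := by exact_mod_cast hprod
  nlinarith [Complex.re_sq_le_normSq a]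

lemma jacobiSum_pow_pow {R R' : Type*} [CommRing R] [Fintype R] [CommRing R']
    (χ : MulChar R R') {k : ℕ} (hk : k ≠ 0) :
    jacobiSum (χ ^ k) (χ ^ k) = ∑ x, (χ x * χ (1 - x)) ^ k := by
  simp only [jacobiSum, MulChar.pow_apply' χ hk, mul_pow]

lemma star_jacobiSum {R : Type*} [CommRing R] [Fintype R] (χ ψ : MulChar R ℂ) :
    star (jacobiSum χ ψ) = jacobiSum χ⁻¹ ψ⁻¹ := by
  simp only [jacobiSum, star_sum, star_mul', MulChar.star_apply']

namespace MulChar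

variable {F R : Type*} [Field F] [CommMonoidWithZero R] {χ : MulChar F R}

lemma apply_pow_three_eq_one (hχ : orderOf χ = 3) {x : F} (hx : x ≠ 0) : χ x ^ 3 = 1 := by
  rw [← pow_apply' χ three_ne_zero, ← hχ, pow_orderOf_eq_one, one_apply hx.isUnit]

lemma exists_pow_three_eq_of_apply_eq_one [Finite F] (hχ : orderOf χ = 3) {x : F} (hx : x ≠ 0)
    (h : χ x = 1) : ∃ c, c ^ 3 = x := by
  obtain ⟨g, hg⟩ := IsCyclic.exists_generator (α := Fˣ)
  obtain ⟨k, hk⟩ : ∃ k : ℕ, g ^ k = Units.mk0 x hx :=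
    mem_powers_iff_mem_zpowers.mpr (hg _)
  have hχg : orderOf (χ g) = 3 := by
    have : Fact (Nat.Prime 3) := ⟨Nat.prime_three⟩
    refine orderOf_eq_prime (apply_pow_three_eq_one hχ g.ne_zero) fun h1 ↦ ?_
    have : χ = 1 := (eq_iff hg χ 1).mpr (by rw [h1, one_apply g.isUnit])
    simp [this] at hχ
  obtain ⟨m, rfl⟩ : 3 ∣ k := by
    rw [← hχg]
    refine orderOf_dvd_of_pow_eq_one ?_
    rw [← map_pow, ← Units.val_pow_eq_pow_val, hk, Units.val_mk0, h]
  exact ⟨(g ^ m : Fˣ), by rw [← Units.val_pow_eq_pow_val, ← pow_mul', hk, Units.val_mk0]⟩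

end MulChar

lemma IsSumOfTwoCubes.of_apply_eq {F R : Type*} [Field F] [Finite F] [CommMonoidWithZero R]
    [Nontrivial R] {χ : MulChar F R} (hχ : orderOf χ = 3) {s n : F} (hs : IsSumOfTwoCubes s)
    (hs0 : s ≠ 0) (h : χ s = χ n) : IsSumOfTwoCubes n := by
  have hn0 : n ≠ 0 := by
    rintro rfl
    exact (hs0.isUnit.map χ).ne_zero (by rw [h, χ.map_zero])
  obtain ⟨c, hc⟩ := χ.exists_pow_three_eq_of_apply_eq_one hχ (mul_ne_zero hn0 (inv_ne_zero hs0))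
    (by rw [map_mul, ← h, ← map_mul, mul_inv_cancel₀ hs0, map_one])
  simpa [hc, inv_mul_cancel_right₀ hs0] using hs.mul_cube c

lemma IsSumOfTwoCubes.of_apply_mul_apply_one_sub_eq {F R : Type*} [Field F] [Finite F]
    [CommRing R] [IsDomain R] {χ : MulChar F R} (hχ : orderOf χ = 3) {x n : F}
    (h : χ x * χ (1 - x) = χ n) : IsSumOfTwoCubes n := by
  rcases eq_or_ne n 0 with rfl | hn0
  · exact ⟨0, 0, by ring⟩
  have hχn : χ n ≠ 0 := (hn0.isUnit.map χ).ne_zero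
  have hx0 : x ≠ 0 := by rintro rfl; simp [← h, MulChar.map_zero] at hχn
  have hx1 : 1 - x ≠ 0 := by intro h0; simp [← h, h0, MulChar.map_zero] at hχn
  have ha3 := χ.apply_pow_three_eq_one hχ hx0
  have hb3 := χ.apply_pow_three_eq_one hχ hx1
  by_cases ha1 : χ x = 1
  · obtain ⟨c, hc⟩ := χ.exists_pow_three_eq_of_apply_eq_one hχ hx0 ha1
    subst hc
    exact (IsSumOfTwoCubes.one_sub_cube c).of_apply_eq hχ hx1 (by rw [← h, ha1, one_mul])
  by_cases hb1 : χ (1 - x) = 1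
  · obtain ⟨c, hc⟩ := χ.exists_pow_three_eq_of_apply_eq_one hχ hx1 hb1
    have hxc : x = 1 - c ^ 3 := by rw [hc, sub_sub_cancel]
    subst hxc
    exact (IsSumOfTwoCubes.one_sub_cube c).of_apply_eq hχ hx0 (by rw [← h, hb1, mul_one])
  by_cases hab : χ x = χ (1 - x)
  · obtain ⟨c, hc⟩ := χ.exists_pow_three_eq_of_apply_eq_one hχ (mul_ne_zero hx1 (inv_ne_zero hx0))
      (by rw [map_mul, ← hab, ← map_mul, mul_inv_cancel₀ hx0, map_one])
    have hs : IsSumOfTwoCubes x⁻¹ := ⟨1, c, by rw [hc]; field_simp; ring⟩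
    refine hs.of_apply_eq hχ (inv_ne_zero hx0) (mul_right_cancel₀ (hx0.isUnit.map χ).ne_zero ?_)
    rw [← map_mul, inv_mul_cancel₀ hx0, map_one, ← h, ← hab, ← ha3]
    ring
  · have hsum : χ x + χ (1 - x) + 1 = 0 := mul_left_cancel₀ (sub_ne_zero.mpr hab) <| by
      linear_combination sq_add_self_add_one_eq_zero ha3 ha1 - sq_add_self_add_one_eq_zero hb3 hb1
    have h1 : IsSumOfTwoCubes (1 : F) := ⟨1, 0, by ring⟩
    refine h1.of_apply_eq hχ one_ne_zero ?_
    rw [map_one, ← h]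
    linear_combination -(χ x) * hsum + sq_add_self_add_one_eq_zero ha3 ha1

section CubicJacobiSum

variable {F : Type*} [Field F] [Fintype F] {χ : MulChar F ℂ}

lemma jacobiSum_relation_of_not_isSumOfTwoCubes (hχ : orderOf χ = 3) {n : F}
    (hn : ¬ IsSumOfTwoCubes n) (hν : χ n ^ 2 + χ n + 1 = 0) :
    (Fintype.card F - 2 : ℂ) + χ n * star (jacobiSum χ χ) + χ n ^ 2 * jacobiSum χ χ = 0 := by
  have hχ3 : χ ^ 3 = 1 := hχ ▸ pow_orderOf_eq_one χ
  have hχ4 : χ ^ 4 = χ := by rw [pow_succ, hχ3, one_mul]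
  have hpoint : ∀ x : F, (χ x * χ (1 - x)) ^ 3 + χ n * (χ x * χ (1 - x)) ^ 2
      + χ n ^ 2 * (χ x * χ (1 - x)) = 0 := fun x ↦
    pow_three_add_mul_sq_add_sq_mul_eq_zero hν
      (by rw [mul_pow, ← χ.pow_apply' four_ne_zero, ← χ.pow_apply' four_ne_zero, hχ4])
      fun h ↦ hn (.of_apply_mul_apply_one_sub_eq hχ h)
  have hsum := Finset.sum_eq_zero (s := univ) fun x _ ↦ hpoint x
  rwa [sum_add_distrib, sum_add_distrib, ← mul_sum, ← mul_sum,
    ← jacobiSum_pow_pow χ three_ne_zero, ← jacobiSum_pow_pow χ two_ne_zero, hχ3,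
    ← inv_eq_sq_of_orderOf_eq_three hχ, jacobiSum_one_one, ← star_jacobiSum] at hsum

theorem FiniteField.isSumOfTwoCubes_of_three_dvd (h3 : 3 ∣ Fintype.card F - 1)
    (h7 : 7 < Fintype.card F) (n : F) : IsSumOfTwoCubes n := by
  by_contra hn
  obtain ⟨χ, hχ⟩ := MulChar.exists_mulChar_orderOf F h3
    (Complex.isPrimitiveRoot_exp 3 three_ne_zero)
  have hn0 : n ≠ 0 := by rintro rfl; exact hn ⟨0, 0, by ring⟩
  have hν3 := χ.apply_pow_three_eq_one hχ hn0
  have hν : χ n ^ 2 + χ n + 1 = 0 := by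
    refine sq_add_self_add_one_eq_zero hν3 fun h1 ↦ hn ?_
    obtain ⟨c, hc⟩ := χ.exists_pow_three_eq_of_apply_eq_one hχ hn0 h1
    exact ⟨c, 0, by rw [hc]; ring⟩
  have hχ1 : χ ≠ 1 := by rintro rfl; simp at hχ
  have hχχ : χ * χ ≠ 1 := fun h ↦ by
    simpa [hχ] using orderOf_dvd_of_pow_eq_one (by rwa [sq] : χ ^ 2 = 1)
  have hchar : ringChar ℂ ≠ ringChar F := by
    simpa only [ringChar.eq_zero] using (CharP.ringChar_ne_zero_of_finite F).symm
  have hJ := jacobiSum_mul_jacobiSum_inv hchar hχ1 hχ1 hχχ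
  rw [← star_jacobiSum] at hJ
  have hstar : star (χ n) = χ n ^ 2 := by
    rw [MulChar.star_apply', ← χ.pow_apply' two_ne_zero, inv_eq_sq_of_orderOf_eq_three hχ]
  have hrel := jacobiSum_relation_of_not_isSumOfTwoCubes hχ hn hν
  set J := jacobiSum χ χ
  -- `a = ν² J` satisfies `a + ā = 2 - q` and `a ā = q`, forcing `(q - 2)² ≤ 4 q`.
  have hsum : χ n ^ 2 * J + star (χ n ^ 2 * J) = 2 - (Fintype.card F : ℝ) := by
    rw [star_mul', star_pow, hstar]
    push_cast
    linear_combination hrel + χ n * star J * hν3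
  have hprod : χ n ^ 2 * J * star (χ n ^ 2 * J) = (Fintype.card F : ℝ) := by
    rw [star_mul', star_pow, hstar]
    push_cast
    linear_combination hJ + (χ n ^ 3 + 1) * J * star J * hν3
  have hq := Complex.sub_two_sq_le_four_mul hsum hprod
  have h8 : (8 : ℝ) ≤ Fintype.card F := by exact_mod_cast h7
  nlinarith

end CubicJacobiSum

lemma FiniteField.exists_pow_three_eq {F : Type*} [Field F] [Fintype F]
    (h : ¬ 3 ∣ Fintype.card F - 1) (x : F) : ∃ c, c ^ 3 = x := by
  classical
  rcases eq_or_ne x 0 with rfl | hx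
  · exact ⟨0, zero_pow three_ne_zero⟩
  have hcop : (Nat.card Fˣ).Coprime 3 := by
    rw [Nat.card_eq_fintype_card, Fintype.card_units]
    exact ((Nat.Prime.coprime_iff_not_dvd Nat.prime_three).mpr h).symm
  obtain ⟨c, hc⟩ := (powCoprime hcop).surjective (Units.mk0 x hx)
  exact ⟨c, by simpa using congrArg Units.val hc⟩

theorem FiniteField.isSumOfTwoCubes {F : Type*} [Field F] [Fintype F]
    (hF : 3 ∣ Fintype.card F - 1 → 7 < Fintype.card F) (x : F) : IsSumOfTwoCubes x := by
  by_cases h3 : 3 ∣ Fintype.card F - 1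
  · exact isSumOfTwoCubes_of_three_dvd h3 (hF h3) x
  · obtain ⟨c, rfl⟩ := exists_pow_three_eq h3 x
    exact ⟨c, 0, by ring⟩

theorem ZMod.isSumOfTwoCubes_prime {p : ℕ} [hp : Fact p.Prime] (hp7 : p ≠ 7) (x : ZMod p) :
    IsSumOfTwoCubes x := by
  refine FiniteField.isSumOfTwoCubes (fun h3 ↦ ?_) x
  rw [ZMod.card] at h3 ⊢
  by_contra! hle
  have := hp.out.two_le
  interval_cases p <;> first | omega | exact absurd hp.out (by norm_num)

namespace PadicInt

variable {p : ℕ} [Fact p.Prime]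

lemma norm_lt_one_iff_toZMod_eq_zero {x : ℤ_[p]} : ‖x‖ < 1 ↔ toZMod x = 0 := by
  rw [← mem_nonunits, ← IsLocalRing.mem_maximalIdeal, ← ker_toZMod, RingHom.mem_ker]

lemma exists_pow_three_eq (hp3 : p ≠ 3) {a d : ℤ_[p]} (ha : toZMod a ≠ 0)
    (h : toZMod (a ^ 3) = toZMod d) : ∃ z, z ^ 3 = d := by
  have h3 : (3 : ZMod p) ≠ 0 := by
    rw [← Nat.cast_ofNat, Ne, ZMod.natCast_eq_zero_iff]
    exact fun hdvd ↦ hp3 ((Nat.prime_dvd_prime_iff_eq Fact.out Nat.prime_three).mp hdvd)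
  have hderiv : ‖3 * a ^ 2‖ = 1 := by
    refine le_antisymm (norm_le_one _) (not_lt.mp fun hlt ↦ ?_)
    rw [norm_lt_one_iff_toZMod_eq_zero, map_mul, map_pow, map_ofNat] at hlt
    exact mul_ne_zero h3 (pow_ne_zero 2 ha) hlt
  have hval : ‖a ^ 3 - d‖ < 1 := by
    rw [norm_lt_one_iff_toZMod_eq_zero, map_sub, h, sub_self]
  have hF' : (X ^ 3 - C d).derivative.aeval a = 3 * a ^ 2 := by
    norm_num
  obtain ⟨z, hz, -⟩ := hensels_lemma (F := X ^ 3 - C d) (a := a) <| by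
    rw [hF', hderiv, one_pow]
    simpa using hval
  exact ⟨z, by simpa [sub_eq_zero] using hz⟩

theorem isSumOfTwoCubes (hp3 : p ≠ 3) (hp7 : p ≠ 7) (c : ℤ_[p]) : IsSumOfTwoCubes c := by
  obtain ⟨u₀, v₀, hu₀, huv⟩ := (ZMod.isSumOfTwoCubes_prime hp7 (toZMod c)).exists_left_ne_zero
  obtain ⟨u, rfl⟩ := ZMod.ringHom_surjective toZMod u₀
  obtain ⟨v, rfl⟩ := ZMod.ringHom_surjective toZMod v₀
  obtain ⟨z, hz⟩ := exists_pow_three_eq hp3 hu₀ (d := c - v ^ 3) <| by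
    rw [map_sub, ← huv, map_pow, map_pow, add_sub_cancel_right]
  exact ⟨z, v, by rw [hz, sub_add_cancel]⟩

end PadicInt

theorem ZMod.isSumOfTwoCubes_prime_pow {p k : ℕ} (hp : p.Prime) (hk : 0 < k) (h7 : ¬ 7 ∣ p ^ k)
    (h9 : ¬ 9 ∣ p ^ k) (x : ZMod (p ^ k)) : IsSumOfTwoCubes x := by
  have := Fact.mk hp
  have hp7 : p ≠ 7 := by rintro rfl; exact h7 (dvd_pow_self 7 hk.ne')
  by_cases hp3 : p = 3
  · subst hp3
    obtain rfl : k = 1 := by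
      by_contra hk1
      exact h9 (pow_dvd_pow 3 (by omega : 2 ≤ k))
    -- `ZMod (3 ^ 1)` unfolds to `ZMod 3`
    exact ZMod.isSumOfTwoCubes_prime hp7 x
  · obtain ⟨c, rfl⟩ := ZMod.ringHom_surjective (PadicInt.toZModPow k) x
    exact (PadicInt.isSumOfTwoCubes hp3 hp7 c).map _

theorem ZMod.isSumOfTwoCubes {N : ℕ} (hN : N ≠ 0) (h7 : ¬ 7 ∣ N) (h9 : ¬ 9 ∣ N) :
    ∀ x : ZMod N, IsSumOfTwoCubes x := by
  induction N using Nat.recOnPosPrimePosCoprime with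
  | prime_pow p k hp hk => exact isSumOfTwoCubes_prime_pow hp hk h7 h9
  | zero => exact absurd rfl hN
  | one => exact fun x ↦ ⟨0, 0, Subsingleton.elim _ _⟩
  | coprime a b ha hb hab iha ihb =>
    exact isSumOfTwoCubes_mul hab
      (iha (by omega) (fun h ↦ h7 (h.mul_right b)) (fun h ↦ h9 (h.mul_right b)))
      (ihb (by omega) (fun h ↦ h7 (h.mul_left a)) (fun h ↦ h9 (h.mul_left a)))

theorem stmt_13 (N : ℕ) (hN : 0 < N) (h7 : ¬ 7 ∣ N) (h9 : ¬ 9 ∣ N) (n : ℤ) :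
    ∃ u v : ℤ, n ≡ u ^ 3 + v ^ 3 [ZMOD N] := by
  obtain ⟨u, v, huv⟩ := ZMod.isSumOfTwoCubes hN.ne' h7 h9 n
  refine ⟨u.cast, v.cast, ?_⟩
  rw [← ZMod.intCast_eq_intCast_iff]
  push_cast [ZMod.intCast_zmod_cast]
  exact huv.symm
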